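/- Let $A^* = D_2(\Lambda)$ with $\Lambda\neq 0$ and let $K_\rho = \{k\in O_p : kA^* = A^*k \text{ and } kX^* = X^*\}$ with $X^* = rX_p^*$. Then every $k \in K_\rho$ is block diagonal, $k = \mathrm{diag}(\tilde k_1, \tilde k_2)$ with $\tilde k_1 \in O(2p_0)$ commuting with $D_2(\tilde\Lambda)$ and $\tilde k_2 \in O(p - 2p_0)$ fixing $X^*$, where $2p_0 = \mathrm{rank}\, D_2(\Lambda)$ and $\tilde\Lambda$ collects the nonzero $\lambda_i$; moreover $\det \tilde k_1 = 1$. -/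

import Mathlib

/-!
Since `D₂(Λ)` vanishes outside its leading `2p₀ × 2p₀` corner and is invertible there, a matrix
commuting with it is block diagonal, and the blocks inherit orthogonality, the commutation and the
fixed vector. For the determinant, group the coordinates of the corner in pairs: the `(a, b)` block
`B` of `k̃₁` satisfies `B (λ_b J) = (λ_a J) B`, and since `λ_a + λ_b ≠ 0` this forces `B J = J B`,
i.e. `B` is multiplication by a complex number. So `k̃₁` is the realification of a complex matrix
`C`, whence `det k̃₁ = |det C|² ≥ 0`, and `det k̃₁ = ±1` by orthogonality.
-/

open Matrix

/-- The block-diagonal antisymmetric matrix `D₂(Λ)` with `2×2` diagonal blocks `λᵢ J`. -/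
def D2 (p : ℕ) (Λ : Fin (p / 2) → ℝ) : Matrix (Fin p) (Fin p) ℝ := fun i j =>
  if h : i.val % 2 = 0 ∧ j.val = i.val + 1 then Λ ⟨i.val / 2, by omega⟩
  else if h' : j.val % 2 = 0 ∧ i.val = j.val + 1 then -Λ ⟨j.val / 2, by omega⟩
  else 0

/-- The vector `r X_p^*` (the last dual basis vector scaled by `r`). -/
def rXp (p : ℕ) (r : ℝ) : Fin p → ℝ := fun i => if i.val + 1 = p then r else 0

open Complex

theorem Complex.exists_leftMulMatrix_eq_of_intertwines {B : Matrix (Fin 2) (Fin 2) ℝ} {s t : ℝ}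
    (hst : s + t ≠ 0)
    (h : B * Algebra.leftMulMatrix basisOneI (s * I) = Algebra.leftMulMatrix basisOneI (t * I) * B) :
    ∃ z : ℂ, Algebra.leftMulMatrix basisOneI z = B := by
  have hJ (x : ℝ) : Algebra.leftMulMatrix basisOneI (x * I) = !![0, -x; x, 0] := by
    simp [Algebra.leftMulMatrix_complex]
  rw [hJ, hJ, B.eta_fin_two, mul_fin_two, mul_fin_two, ← Matrix.ext_iff] at h
  simp only [of_apply, cons_val', cons_val_fin_one, cons_val_zero, cons_val_one, Fin.forall_fin_two,
    mul_zero, zero_mul, zero_add, add_zero, mul_neg, neg_mul, neg_inj] at h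
  obtain ⟨⟨h00, h01⟩, h10, h11⟩ := h
  have hdiag : B 1 1 = B 0 0 := (mul_right_inj' hst).mp (by linear_combination h10 - h01)
  have hanti : B 0 1 = -B 1 0 := (mul_right_inj' hst).mp (by linear_combination h00 - h11)
  refine ⟨⟨B 0 0, B 1 0⟩, ?_⟩
  rw [Algebra.leftMulMatrix_complex, B.eta_fin_two, hdiag, hanti]
  rfl

namespace Matrix

section Realify

variable {n : Type*} [Fintype n] [DecidableEq n]

/-- The matrix of `C` acting on `ℂⁿ ≅ ℝ^{n × 2}`: the entry `z` becomes the block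
`!![re z, -im z; im z, re z]`. -/
noncomputable def realify (C : Matrix n n ℂ) : Matrix (n × Fin 2) (n × Fin 2) ℝ :=
  comp n n (Fin 2) (Fin 2) ℝ (C.map (Algebra.leftMulMatrix basisOneI))

theorem det_realify (C : Matrix n n ℂ) : (realify C).det = normSq C.det := by
  rw [realify, ← Algebra.norm_complex_apply, Algebra.norm_eq_matrix_det basisOneI]
  exact (det_det C (Algebra.leftMulMatrix basisOneI).toRingHom).symm

theorem exists_realify_eq_of_commute {μ : n → ℝ} (hμ : ∀ a c, μ a + μ c ≠ 0)
    {M : Matrix (n × Fin 2) (n × Fin 2) ℝ}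
    (h : M * realify (diagonal fun a => (μ a : ℂ) * I) =
      realify (diagonal fun a => (μ a : ℂ) * I) * M) :
    ∃ C, realify C = M := by
  set N := (comp n n (Fin 2) (Fin 2) ℝ).symm M
  have hM : M = compRingEquiv n (Fin 2) ℝ N := (Equiv.apply_symm_apply _ M).symm
  have hD : realify (diagonal fun a => (μ a : ℂ) * I) = compRingEquiv n (Fin 2) ℝ
      (diagonal fun a => Algebra.leftMulMatrix basisOneI ((μ a : ℂ) * I)) := by
    rw [realify, diagonal_map (map_zero _)]
    rfl
  rw [hM, hD, ← map_mul, ← map_mul] at h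
  have block (a c : n) := congrFun (congrFun ((compRingEquiv n (Fin 2) ℝ).injective h) a) c
  simp only [mul_diagonal, diagonal_mul] at block
  choose C hC using fun a c => Complex.exists_leftMulMatrix_eq_of_intertwines (hμ c a) (block a c)
  refine ⟨C, ?_⟩
  rw [hM]
  exact congrArg (comp n n (Fin 2) (Fin 2) ℝ) (ext fun a c => hC a c)

theorem det_nonneg_of_commute_realify_diagonal {μ : n → ℝ} (hμ : ∀ a c, μ a + μ c ≠ 0)
    {M : Matrix (n × Fin 2) (n × Fin 2) ℝ}
    (h : M * realify (diagonal fun a => (μ a : ℂ) * I) =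
      realify (diagonal fun a => (μ a : ℂ) * I) * M) :
    0 ≤ M.det := by
  obtain ⟨C, rfl⟩ := exists_realify_eq_of_commute hμ h
  rw [det_realify]
  exact normSq_nonneg _

end Realify

section Blocks

variable {m n R : Type*} [Fintype m] [Fintype n]

theorem eq_fromBlocks_of_commute_fromBlocks_zero [DecidableEq m] [CommRing R] {A : Matrix m m R}
    (hA : IsUnit A.det) {K : Matrix (m ⊕ n) (m ⊕ n) R}
    (h : K * fromBlocks A 0 0 0 = fromBlocks A 0 0 0 * K) :
    K = fromBlocks K.toBlocks₁₁ 0 0 K.toBlocks₂₂ ∧ K.toBlocks₁₁ * A = A * K.toBlocks₁₁ := by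
  rw [← fromBlocks_toBlocks K, fromBlocks_multiply, fromBlocks_multiply] at h
  simp only [Matrix.mul_zero, Matrix.zero_mul, add_zero, fromBlocks_inj] at h
  obtain ⟨hcomm, h₁₂, h₂₁, -⟩ := h
  have hB : K.toBlocks₁₂ = 0 := by
    rw [← Matrix.one_mul K.toBlocks₁₂, ← nonsing_inv_mul A hA, Matrix.mul_assoc, ← h₁₂,
      Matrix.mul_zero]
  have hC : K.toBlocks₂₁ = 0 := by
    rw [← Matrix.mul_one K.toBlocks₂₁, ← mul_nonsing_inv A hA, ← Matrix.mul_assoc, h₂₁,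
      Matrix.zero_mul]
  refine ⟨?_, hcomm⟩
  conv_lhs => rw [← fromBlocks_toBlocks K, hB, hC]

theorem submatrix_mem_orthogonalGroup [DecidableEq m] [DecidableEq n] [CommRing R]
    {k : Matrix n n R} (e : m ≃ n) (hk : k ∈ orthogonalGroup n R) :
    k.submatrix e e ∈ orthogonalGroup m R := by
  rw [mem_orthogonalGroup_iff] at hk ⊢
  rw [transpose_submatrix, submatrix_mul_equiv, hk, submatrix_one_equiv]

theorem fromBlocks_zero_mem_orthogonalGroup_iff [DecidableEq m] [DecidableEq n] [CommRing R]
    {A : Matrix m m R} {D : Matrix n n R} :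
    fromBlocks A 0 0 D ∈ orthogonalGroup (m ⊕ n) R ↔
      A ∈ orthogonalGroup m R ∧ D ∈ orthogonalGroup n R := by
  simp [mem_orthogonalGroup_iff, fromBlocks_transpose, fromBlocks_multiply, ← fromBlocks_one,
    fromBlocks_inj]

theorem fromBlocks_zero_mulVec_inr_eq [NonUnitalNonAssocSemiring R] {A : Matrix m m R} {D : Matrix n n R}
    {x : m ⊕ n → R} (h : fromBlocks A 0 0 D *ᵥ x = x) : D *ᵥ (x ∘ Sum.inr) = x ∘ Sum.inr := by
  simpa [fromBlocks_mulVec] using congrArg (· ∘ Sum.inr) h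

theorem det_eq_one_of_mem_orthogonalGroup [DecidableEq m] {A : Matrix m m ℝ}
    (hA : A ∈ orthogonalGroup m ℝ) (h : 0 ≤ A.det) : A.det = 1 :=
  (Unitary.mem_iff_eq_one_or_eq_neg_one.1 (det_of_mem_unitary hA)).resolve_right
    fun h₁ => by linarith

end Blocks

end Matrix

def finSumSubEquiv {m p : ℕ} (h : m ≤ p) : Fin m ⊕ Fin (p - m) ≃ Fin p :=
  finSumFinEquiv.trans (finCongr (Nat.add_sub_of_le h))

def finPairEquiv (n : ℕ) : Fin n × Fin 2 ≃ Fin (2 * n) :=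
  finProdFinEquiv.trans (finCongr (Nat.mul_comm n 2))

theorem apply_eq_zero_of_submatrix_finSumSubEquiv_eq_fromBlocks {R : Type*} [Zero R] {m p : ℕ}
    (h : m ≤ p) {k : Matrix (Fin p) (Fin p) R} {A : Matrix (Fin m) (Fin m) R}
    {D : Matrix (Fin (p - m)) (Fin (p - m)) R}
    (hk : k.submatrix (finSumSubEquiv h) (finSumSubEquiv h) = fromBlocks A 0 0 D) {i j : Fin p}
    (hij : (i.val < m ∧ ¬ j.val < m) ∨ (¬ i.val < m ∧ j.val < m)) : k i j = 0 := by
  obtain ⟨x, rfl⟩ := (finSumSubEquiv h).surjective i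
  obtain ⟨y, rfl⟩ := (finSumSubEquiv h).surjective j
  have hxy := congrFun (congrFun hk x) y
  rcases x with x | x <;> rcases y with y | y
  · simp [finSumSubEquiv] at hij
  · exact hxy
  · exact hxy
  · simp [finSumSubEquiv] at hij

theorem rXp_finSumSubEquiv_inr {m p : ℕ} (h : m ≤ p) (r : ℝ) :
    rXp p r ∘ finSumSubEquiv h ∘ Sum.inr = rXp (p - m) r := by
  ext j
  simp only [Function.comp_apply, rXp, finSumSubEquiv, Equiv.trans_apply,
    finSumFinEquiv_apply_right, finCongr_apply, Fin.val_cast, Fin.val_natAdd]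
  exact if_congr (by omega) rfl rfl

section D2

variable {p : ℕ} {Λ : Fin (p / 2) → ℝ}

theorem D2_apply_eq_zero_of_le {n : ℕ} (hΛ : ∀ a : Fin (p / 2), n ≤ a.val → Λ a = 0)
    {i j : Fin p} (hij : 2 * n ≤ i.val ∨ 2 * n ≤ j.val) : D2 p Λ i j = 0 := by
  unfold D2
  split_ifs
  · exact hΛ _ (by dsimp only; omega)
  · rw [hΛ _ (by dsimp only; omega), neg_zero]
  · rfl

theorem D2_submatrix_finSumSubEquiv {n : ℕ} (h : 2 * n ≤ p)
    (hΛ : ∀ a : Fin (p / 2), n ≤ a.val → Λ a = 0) :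
    (D2 p Λ).submatrix (finSumSubEquiv h) (finSumSubEquiv h) =
      fromBlocks ((D2 p Λ).submatrix (Fin.castLE h) (Fin.castLE h)) 0 0 0 := by
  ext (i | i) (j | j)
  · rfl
  all_goals exact D2_apply_eq_zero_of_le hΛ (by simp [finSumSubEquiv])

theorem D2_castLE_submatrix_finPairEquiv {n : ℕ} (h : 2 * n ≤ p) :
    ((D2 p Λ).submatrix (Fin.castLE h) (Fin.castLE h)).submatrix (finPairEquiv n)
        (finPairEquiv n) =
      realify (diagonal fun a : Fin n => ((-Λ ⟨a, by omega⟩ : ℝ) : ℂ) * I) := by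
  ext ⟨a, b⟩ ⟨c, d⟩
  simp only [submatrix_apply, realify, comp_apply, map_apply, finPairEquiv, Equiv.trans_apply]
  rcases eq_or_ne a c with rfl | hac
  · rw [diagonal_apply_eq]
    fin_cases b <;> fin_cases d <;> simp [D2, Algebra.leftMulMatrix_complex, add_comm 1]
  · rw [diagonal_apply_ne _ hac, map_zero]
    have hac' : a.val ≠ c.val := Fin.val_ne_of_ne hac
    simp only [D2, Fin.val_castLE, finCongr_apply, Fin.val_cast, finProdFinEquiv_apply_val]
    split_ifs <;> first | rfl | omega

theorem isUnit_det_D2_castLE {n : ℕ} (h : 2 * n ≤ p)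
    (hΛ : ∀ a : Fin (p / 2), a.val < n → Λ a ≠ 0) :
    IsUnit ((D2 p Λ).submatrix (Fin.castLE h) (Fin.castLE h)).det := by
  rw [← det_submatrix_equiv_self (finPairEquiv n), D2_castLE_submatrix_finPairEquiv, det_realify,
    det_diagonal, isUnit_iff_ne_zero]
  simp [Finset.prod_ne_zero_iff, hΛ]

theorem det_nonneg_of_commute_D2_castLE {n : ℕ} (h : 2 * n ≤ p)
    (hΛ : ∀ a : Fin (p / 2), a.val < n → 0 < Λ a) {K : Matrix (Fin (2 * n)) (Fin (2 * n)) ℝ}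
    (hK : K * (D2 p Λ).submatrix (Fin.castLE h) (Fin.castLE h) =
      (D2 p Λ).submatrix (Fin.castLE h) (Fin.castLE h) * K) :
    0 ≤ K.det := by
  rw [← det_submatrix_equiv_self (finPairEquiv n)]
  refine det_nonneg_of_commute_realify_diagonal (μ := fun a : Fin n => -Λ ⟨a, by omega⟩)
    (fun a c => ?_) ?_
  · have := hΛ ⟨a, by omega⟩ a.isLt
    have := hΛ ⟨c, by omega⟩ c.isLt
    exact (show _ < (0 : ℝ) by linarith).ne
  · rw [← D2_castLE_submatrix_finPairEquiv, submatrix_mul_equiv, submatrix_mul_equiv, hK]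

end D2

theorem stability_group_block_structure (p p₀ : ℕ) (h2p₀ : 2 * p₀ ≤ p)
    (Λ : Fin (p / 2) → ℝ) (hΛpos : ∀ i, 0 ≤ Λ i)
    -- `p₀` is the number of nonzero `λᵢ` (`Λ` being sorted, these come first)
    (hp₀ : ∀ i : Fin (p / 2), Λ i ≠ 0 ↔ i.val < p₀)
    (r : ℝ)
    (k : Matrix (Fin p) (Fin p) ℝ) (hk : k ∈ Matrix.orthogonalGroup (Fin p) ℝ)
    (hcomm : k * D2 p Λ = D2 p Λ * k) (hfix : k.mulVec (rXp p r) = rXp p r) :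
    -- `k` is block diagonal `diag(k̃₁, k̃₂)` with respect to `ℝ^p = ℝ^{2p₀} ⊕ ℝ^{p-2p₀}`:
    (∀ i j : Fin p, ((i.val < 2 * p₀ ∧ ¬ j.val < 2 * p₀) ∨
        (¬ i.val < 2 * p₀ ∧ j.val < 2 * p₀)) → k i j = 0) ∧
    -- the upper-left block `k̃₁` is orthogonal and commutes with `D₂(Λ̃)`
    -- (the upper-left block of `D₂(Λ)`, which collects the nonzero `λᵢ`):
    (k.submatrix (fun i : Fin (2 * p₀) => (⟨i.val, by omega⟩ : Fin p))
          (fun j : Fin (2 * p₀) => (⟨j.val, by omega⟩ : Fin p))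
        ∈ Matrix.orthogonalGroup (Fin (2 * p₀)) ℝ) ∧
    (k.submatrix (fun i : Fin (2 * p₀) => (⟨i.val, by omega⟩ : Fin p))
          (fun j : Fin (2 * p₀) => (⟨j.val, by omega⟩ : Fin p)) *
        (D2 p Λ).submatrix (fun i : Fin (2 * p₀) => (⟨i.val, by omega⟩ : Fin p))
          (fun j : Fin (2 * p₀) => (⟨j.val, by omega⟩ : Fin p))
      = (D2 p Λ).submatrix (fun i : Fin (2 * p₀) => (⟨i.val, by omega⟩ : Fin p))
          (fun j : Fin (2 * p₀) => (⟨j.val, by omega⟩ : Fin p)) *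
        k.submatrix (fun i : Fin (2 * p₀) => (⟨i.val, by omega⟩ : Fin p))
          (fun j : Fin (2 * p₀) => (⟨j.val, by omega⟩ : Fin p))) ∧
    -- the lower-right block `k̃₂` is orthogonal and fixes `X* = r X_p^*`:
    (k.submatrix (fun i : Fin (p - 2 * p₀) => (⟨2 * p₀ + i.val, by omega⟩ : Fin p))
          (fun j : Fin (p - 2 * p₀) => (⟨2 * p₀ + j.val, by omega⟩ : Fin p))
        ∈ Matrix.orthogonalGroup (Fin (p - 2 * p₀)) ℝ) ∧
    ((k.submatrix (fun i : Fin (p - 2 * p₀) => (⟨2 * p₀ + i.val, by omega⟩ : Fin p))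
          (fun j : Fin (p - 2 * p₀) => (⟨2 * p₀ + j.val, by omega⟩ : Fin p))).mulVec
        (rXp (p - 2 * p₀) r) = rXp (p - 2 * p₀) r) ∧
    -- moreover `det k̃₁ = 1`:
    (k.submatrix (fun i : Fin (2 * p₀) => (⟨i.val, by omega⟩ : Fin p))
          (fun j : Fin (2 * p₀) => (⟨j.val, by omega⟩ : Fin p))).det = 1 := by
  have hΛ_pos (a : Fin (p / 2)) (ha : a.val < p₀) : 0 < Λ a :=
    (hΛpos a).lt_of_ne' ((hp₀ a).2 ha)
  have hΛ_zero (a : Fin (p / 2)) (ha : p₀ ≤ a.val) : Λ a = 0 :=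
    not_not.1 (mt (hp₀ a).1 (by omega))
  set e := finSumSubEquiv h2p₀
  set K := k.submatrix e e
  obtain ⟨hK, hcomm₁⟩ := eq_fromBlocks_of_commute_fromBlocks_zero (K := K)
    (isUnit_det_D2_castLE h2p₀ fun a ha => (hp₀ a).2 ha)
    (by rw [← D2_submatrix_finSumSubEquiv h2p₀ hΛ_zero, submatrix_mul_equiv, submatrix_mul_equiv,
      hcomm])
  have horth : K ∈ orthogonalGroup _ ℝ := submatrix_mem_orthogonalGroup e hk
  have hfixK : K *ᵥ (rXp p r ∘ e) = rXp p r ∘ e := by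
    rw [submatrix_mulVec_equiv, Function.comp_assoc, Equiv.self_comp_symm, Function.comp_id, hfix]
  rw [hK] at horth hfixK
  obtain ⟨horth₁, horth₂⟩ := fromBlocks_zero_mem_orthogonalGroup_iff.1 horth
  have hfix₂ := fromBlocks_zero_mulVec_inr_eq hfixK
  rw [Function.comp_assoc, rXp_finSumSubEquiv_inr] at hfix₂
  -- `K.toBlocks₁₁` and `K.toBlocks₂₂` are the two blocks of the statement up to definitional unfolding.
  exact ⟨fun i j => apply_eq_zero_of_submatrix_finSumSubEquiv_eq_fromBlocks h2p₀ hK, horth₁,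
    hcomm₁, horth₂, hfix₂,
    det_eq_one_of_mem_orthogonalGroup horth₁ (det_nonneg_of_commute_D2_castLE h2p₀ hΛ_pos hcomm₁)⟩
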